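/- Let F : X → ℝ be a non-decreasing, differentiable, DR-submodular function on a compact rectangle X = ∏_{i=1}^n [ℓ_i, u_i] with ℓ_i < u_i for all i, and suppose (∂F/∂x_i)(x̂) ≤ M for all x̂ ∈ X and all i. Then for all x, x̂ ∈ X: 0 ≤ F̆(x; x̂) − F̃(x; x̂) ≤ Σ_{i=1}^n (∂F/∂x_i)(x̂) · (u_i − ℓ_i) ≤ M · Σ_{i=1}^n (u_i − ℓ_i). Consequently, 0 ≤ inf_{x̂ ∈ X} F̆(x; x̂) − F(x) ≤ M · ‖u − ℓ‖₁ for all x ∈ X, so the gap between the approximate overestimator and F tends to 0 as ‖u − ℓ‖₁ → 0. -/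

import Mathlib

/-!
Monotonicity makes every partial derivative nonnegative. Submodularity says that raising
coordinate `i` from `x̂ i` to `v` gains at most as much at a point `z ≥ x̂` as at `x̂`, and
concavity along that coordinate bounds the gain at `x̂` by `∂ᵢF(x̂) (v - x̂ i)`. Raising `x̂` to
`x ⊔ x̂` one coordinate at a time therefore gives `F x ≤ F (x ⊔ x̂) ≤ F̃(x; x̂)`. The comparison of
`F̃` with `F̆` is termwise, from `[x - x̂]⁺ ≤ (u - x̂)/(u - ℓ) · (x - ℓ) ≤ u - ℓ` on `[ℓ, u]`, and
`F̃(x; x) = F x` bounds the infimum from above.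
-/

open Set Function

theorem ConcaveOn.le_add_mul_sub_of_hasDerivAt {S : Set ℝ} {f : ℝ → ℝ} {x y f' : ℝ}
    (hf : ConcaveOn ℝ S f) (hx : x ∈ S) (hy : y ∈ S) (hd : HasDerivAt f f' x) :
    f y ≤ f x + f' * (y - x) := by
  rcases lt_trichotomy x y with hxy | rfl | hyx
  · have h := hf.slope_le_of_hasDerivAt hx hy hxy hd
    rw [slope_def_field, div_le_iff₀ (sub_pos.2 hxy)] at h
    linarith
  · simp
  · have h := hf.le_slope_of_hasDerivAt hy hx hyx hd
    rw [slope_def_field, le_div_iff₀ (sub_pos.2 hyx)] at h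
    linarith

theorem update_eq_self_add_single {ι G : Type*} [DecidableEq ι] [AddCommGroup G]
    (x : ι → G) (i : ι) (v : G) : update x i v = x + Pi.single i (v - x i) := by
  ext j
  rcases eq_or_ne j i with rfl | hj
  · simp
  · simp [hj]

theorem le_add_sum_of_update_le {ι β : Type*} [Fintype ι] [DecidableEq ι]
    {G : (ι → β) → ℝ} {a b : ι → β} (c : ι → ℝ)
    (h : ∀ z : ι → β, (∀ j, z j = a j ∨ z j = b j) → ∀ i, z i = a i →
      G (update z i (b i)) ≤ G z + c i) :
    G b ≤ G a + ∑ i, c i := by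
  suffices ∀ S : Finset ι, G (S.piecewise b a) ≤ G a + ∑ i ∈ S, c i by
    simpa using this Finset.univ
  intro S
  induction S using Finset.induction_on with
  | empty => simp
  | insert i S hi ih =>
    rw [Finset.piecewise_insert, Finset.sum_insert hi]
    have := h (S.piecewise b a) (fun j => by by_cases hj : j ∈ S <;> simp [hj]) i
      (Finset.piecewise_eq_of_notMem _ _ _ hi)
    linarith

def SubmodularOn {β : Type*} [Lattice β] (F : β → ℝ) (s : Set β) : Prop :=
  ∀ x ∈ s, ∀ y ∈ s, F (x ⊔ y) + F (x ⊓ y) ≤ F x + F y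

theorem SubmodularOn.update_sub_le {ι α : Type*} [DecidableEq ι] [LinearOrder α]
    {F : (ι → α) → ℝ} {s : Set (ι → α)} (hF : SubmodularOn F s) {x z : ι → α} (hxz : x ≤ z)
    {i : ι} (hzi : z i = x i) {v : α} (hv : x i ≤ v) (hxv : update x i v ∈ s) (hz : z ∈ s) :
    F (update z i v) - F z ≤ F (update x i v) - F x := by
  have hsup : update x i v ⊔ z = update z i v := by
    ext j
    rcases eq_or_ne j i with rfl | hj
    · simp [hzi, hv]
    · simp [hj, hxz j]
  have hinf : update x i v ⊓ z = x := by
    ext j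
    rcases eq_or_ne j i with rfl | hj
    · simp [hzi, hv]
    · simp [hj, hxz j]
  have := hF _ hxv _ hz
  rw [hsup, hinf] at this
  linarith

theorem max_sub_zero_le_div_mul {ℓ u xh x : ℝ} (hℓu : ℓ < u) (hxh : xh ∈ Icc ℓ u)
    (hx : x ∈ Icc ℓ u) : max (x - xh) 0 ≤ (u - xh) / (u - ℓ) * (x - ℓ) := by
  have hℓu' := sub_pos.2 hℓu
  apply max_le
  · -- `(u - xh) (x - ℓ) - (x - xh) (u - ℓ) = (xh - ℓ) (u - x)`
    rw [div_mul_eq_mul_div, le_div_iff₀ hℓu']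
    nlinarith [mul_nonneg (sub_nonneg.2 hxh.1) (sub_nonneg.2 hx.2)]
  · exact mul_nonneg (div_nonneg (sub_nonneg.2 hxh.2) hℓu'.le) (sub_nonneg.2 hx.1)

theorem div_mul_le_sub {ℓ u xh x : ℝ} (hℓu : ℓ < u) (hxh : xh ∈ Icc ℓ u)
    (hx : x ∈ Icc ℓ u) : (u - xh) / (u - ℓ) * (x - ℓ) ≤ u - ℓ := by
  rw [div_mul_eq_mul_div, div_le_iff₀ (sub_pos.2 hℓu)]
  exact mul_le_mul (by linarith [hxh.1]) (by linarith [hx.2]) (by linarith [hx.1])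
    (by linarith [hℓu])

section Box

variable {ι : Type*} [DecidableEq ι] {ℓ u x : ι → ℝ}

def CoordwiseConcaveOn (F : (ι → ℝ) → ℝ) (s : Set (ι → ℝ)) : Prop :=
  ∀ i, ∀ x ∈ s, ConcaveOn ℝ {t : ℝ | x + Pi.single i t ∈ s} (fun t => F (x + Pi.single i t))

theorem setOf_add_single_mem_Icc (hx : x ∈ Icc ℓ u) (i : ι) :
    {t : ℝ | x + Pi.single i t ∈ Icc ℓ u} = Icc (ℓ i - x i) (u i - x i) := by
  ext t
  simp only [mem_ofPred_eq, mem_Icc]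
  constructor
  · rintro ⟨h₁, h₂⟩
    have := h₁ i
    have := h₂ i
    simp only [Pi.add_apply, Pi.single_eq_same] at *
    constructor <;> linarith
  · rintro ⟨h₁, h₂⟩
    constructor <;> intro j <;> rcases eq_or_ne j i with rfl | hj
    all_goals simp [*, hx.1 _, hx.2 _]
    all_goals linarith

variable [Fintype ι] {F : (ι → ℝ) → ℝ}

theorem hasDerivAt_add_single (hF : DifferentiableAt ℝ F x) (i : ι) :
    HasDerivAt (fun t : ℝ => F (x + Pi.single i t)) (fderiv ℝ F x (Pi.single i 1)) 0 := by
  have hline : HasDerivAt (fun t : ℝ => x + Pi.single i t) (Pi.single i 1) 0 :=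
    ((ContinuousLinearMap.single ℝ (fun _ : ι => ℝ) i).hasDerivAt).const_add x
  exact hF.hasFDerivAt.comp_hasDerivAt_of_eq 0 hline (by simp)

theorem MonotoneOn.fderiv_single_nonneg (hmono : MonotoneOn F (Icc ℓ u)) (hlu : ∀ i, ℓ i < u i)
    (hx : x ∈ Icc ℓ u) (hF : DifferentiableAt ℝ F x) (i : ι) :
    0 ≤ fderiv ℝ F x (Pi.single i 1) := by
  have hline : MonotoneOn (fun t => F (x + Pi.single i t)) (Icc (ℓ i - x i) (u i - x i)) := by
    rw [← setOf_add_single_mem_Icc hx i]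
    exact fun s hs t ht hst => hmono hs ht (add_le_add_right (Pi.single_mono (i := i) hst) x)
  have hne : (Icc (ℓ i - x i) (u i - x i)).Nontrivial :=
    (Icc_infinite (by linarith [hlu i])).nontrivial
  have h0 : (0 : ℝ) ∈ Icc (ℓ i - x i) (u i - x i) := ⟨by linarith [hx.1 i], by linarith [hx.2 i]⟩
  exact (hasDerivAt_add_single hF i).hasDerivWithinAt.nonneg_of_monotoneOn
    (isPreconnected_Icc.preperfect_of_nontrivial hne 0 h0) hline

theorem CoordwiseConcaveOn.le_update (hconc : CoordwiseConcaveOn F (Icc ℓ u))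
    (hx : x ∈ Icc ℓ u) (hF : DifferentiableAt ℝ F x) {i : ι} {v : ℝ}
    (hv : v ∈ Icc (ℓ i) (u i)) :
    F (update x i v) ≤ F x + fderiv ℝ F x (Pi.single i 1) * (v - x i) := by
  have hline := hconc i x hx
  rw [setOf_add_single_mem_Icc hx i] at hline
  have := hline.le_add_mul_sub_of_hasDerivAt (y := v - x i)
    ⟨by linarith [hx.1 i], by linarith [hx.2 i]⟩ ⟨by linarith [hv.1], by linarith [hv.2]⟩
    (hasDerivAt_add_single hF i)
  simpa [update_eq_self_add_single] using this

/-- `gradEstimator F x̂` and `approxEstimator ℓ u F x̂` are the first-order estimators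
`F̃(·; x̂)` and `F̆(·; x̂)`. -/
noncomputable def gradEstimator (F : (ι → ℝ) → ℝ) (xh x : ι → ℝ) : ℝ :=
  F xh + ∑ i, fderiv ℝ F xh (Pi.single i 1) * max (x i - xh i) 0

noncomputable def approxEstimator (ℓ u : ι → ℝ) (F : (ι → ℝ) → ℝ) (xh x : ι → ℝ) : ℝ :=
  F xh + ∑ i, fderiv ℝ F xh (Pi.single i 1) * ((u i - xh i) / (u i - ℓ i)) * (x i - ℓ i)

theorem gradEstimator_self (F : (ι → ℝ) → ℝ) (x : ι → ℝ) : gradEstimator F x x = F x := by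
  simp [gradEstimator]

theorem le_gradEstimator (hsub : SubmodularOn F (Icc ℓ u))
    (hconc : CoordwiseConcaveOn F (Icc ℓ u)) (hmono : MonotoneOn F (Icc ℓ u)) {xh : ι → ℝ}
    (hx : x ∈ Icc ℓ u) (hxh : xh ∈ Icc ℓ u) (hF : DifferentiableAt ℝ F xh) :
    F x ≤ gradEstimator F xh x := by
  set y := x ⊔ xh
  have hy : y ∈ Icc ℓ u := ⟨le_sup_of_le_left hx.1, sup_le hx.2 hxh.2⟩
  have hinc : ∀ z : ι → ℝ, (∀ j, z j = xh j ∨ z j = y j) → ∀ i, z i = xh i →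
      F (update z i (y i)) ≤ F z + fderiv ℝ F xh (Pi.single i 1) * (y i - xh i) := by
    intro z hz i hzi
    have hxhz : xh ≤ z := fun j => by rcases hz j with h | h <;> rw [h]; exact le_sup_right
    have hzy : z ≤ y := fun j => by rcases hz j with h | h <;> rw [h]; exact le_sup_right
    have hyi : y i ∈ Icc (ℓ i) (u i) := ⟨hy.1 i, hy.2 i⟩
    have hupd : update xh i (y i) ∈ Icc ℓ u :=
      ⟨le_update_iff.2 ⟨hyi.1, fun j _ => hxh.1 j⟩, update_le_iff.2 ⟨hyi.2, fun j _ => hxh.2 j⟩⟩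
    have hdr := hsub.update_sub_le hxhz hzi (v := y i) le_sup_right hupd
      ⟨hxh.1.trans hxhz, hzy.trans hy.2⟩
    have htan := hconc.le_update hxh hF hyi
    linarith
  calc F x ≤ F y := hmono hx hy le_sup_left
    _ ≤ F xh + ∑ i, fderiv ℝ F xh (Pi.single i 1) * (y i - xh i) :=
      le_add_sum_of_update_le _ hinc
    _ = gradEstimator F xh x := by simp [gradEstimator, y, ← max_sub_sub_right]

theorem gradEstimator_le_approxEstimator (hmono : MonotoneOn F (Icc ℓ u))
    (hlu : ∀ i, ℓ i < u i) {xh : ι → ℝ} (hx : x ∈ Icc ℓ u) (hxh : xh ∈ Icc ℓ u)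
    (hF : DifferentiableAt ℝ F xh) :
    gradEstimator F xh x ≤ approxEstimator ℓ u F xh x := by
  unfold gradEstimator approxEstimator
  gcongr 2 with i
  rw [mul_assoc]
  exact mul_le_mul_of_nonneg_left
    (max_sub_zero_le_div_mul (hlu i) ⟨hxh.1 i, hxh.2 i⟩ ⟨hx.1 i, hx.2 i⟩)
    (hmono.fderiv_single_nonneg hlu hxh hF i)

theorem approxEstimator_sub_gradEstimator_le (hmono : MonotoneOn F (Icc ℓ u))
    (hlu : ∀ i, ℓ i < u i) {xh : ι → ℝ} (hx : x ∈ Icc ℓ u) (hxh : xh ∈ Icc ℓ u)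
    (hF : DifferentiableAt ℝ F xh) :
    approxEstimator ℓ u F xh x - gradEstimator F xh x
      ≤ ∑ i, fderiv ℝ F xh (Pi.single i 1) * (u i - ℓ i) := by
  simp only [approxEstimator, gradEstimator, add_sub_add_left_eq_sub, ← Finset.sum_sub_distrib]
  gcongr with i
  have hg := hmono.fderiv_single_nonneg hlu hxh hF i
  have hle := div_mul_le_sub (hlu i) ⟨hxh.1 i, hxh.2 i⟩ ⟨hx.1 i, hx.2 i⟩
  rw [mul_assoc]
  nlinarith [mul_le_mul_of_nonneg_left hle hg, mul_nonneg hg (le_max_right (x i - xh i) 0)]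

end Box

theorem stmt_15_general {n : ℕ} (ℓ u : Fin n → ℝ) (hlu : ∀ i, ℓ i < u i)
    (F : (Fin n → ℝ) → ℝ) (hdiff : Differentiable ℝ F)
    (hsub : ∀ x ∈ Set.Icc ℓ u, ∀ y ∈ Set.Icc ℓ u, F (x ⊔ y) + F (x ⊓ y) ≤ F x + F y)
    (hconc : ∀ (i : Fin n), ∀ x ∈ Set.Icc ℓ u,
      ConcaveOn ℝ {t : ℝ | x + Pi.single i t ∈ Set.Icc ℓ u}
        (fun t : ℝ => F (x + Pi.single i t)))
    (hmono : ∀ x ∈ Set.Icc ℓ u, ∀ y ∈ Set.Icc ℓ u, x ≤ y → F x ≤ F y)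
    (M : ℝ) (hM : ∀ xh ∈ Set.Icc ℓ u, ∀ i : Fin n, fderiv ℝ F xh (Pi.single i 1) ≤ M) :
    (∀ x ∈ Set.Icc ℓ u, ∀ xh ∈ Set.Icc ℓ u,
      0 ≤ (F xh + ∑ i : Fin n,
              fderiv ℝ F xh (Pi.single i 1) * ((u i - xh i) / (u i - ℓ i)) * (x i - ℓ i))
          - (F xh + ∑ i : Fin n, fderiv ℝ F xh (Pi.single i 1) * max (x i - xh i) 0)
      ∧ (F xh + ∑ i : Fin n,
              fderiv ℝ F xh (Pi.single i 1) * ((u i - xh i) / (u i - ℓ i)) * (x i - ℓ i))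
          - (F xh + ∑ i : Fin n, fderiv ℝ F xh (Pi.single i 1) * max (x i - xh i) 0)
        ≤ ∑ i : Fin n, fderiv ℝ F xh (Pi.single i 1) * (u i - ℓ i)
      ∧ ∑ i : Fin n, fderiv ℝ F xh (Pi.single i 1) * (u i - ℓ i)
        ≤ M * ∑ i : Fin n, (u i - ℓ i))
    ∧ (∀ x ∈ Set.Icc ℓ u,
      0 ≤ sInf {v : ℝ | ∃ xh ∈ Set.Icc ℓ u,
            v = F xh + ∑ i : Fin n,
              fderiv ℝ F xh (Pi.single i 1) * ((u i - xh i) / (u i - ℓ i)) * (x i - ℓ i)}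
          - F x
      ∧ sInf {v : ℝ | ∃ xh ∈ Set.Icc ℓ u,
            v = F xh + ∑ i : Fin n,
              fderiv ℝ F xh (Pi.single i 1) * ((u i - xh i) / (u i - ℓ i)) * (x i - ℓ i)}
          - F x
        ≤ M * ∑ i : Fin n, (u i - ℓ i)) := by
  have hmonoOn : MonotoneOn F (Icc ℓ u) := fun x hx y hy => hmono x hx y hy
  have gap (x) (hx : x ∈ Icc ℓ u) (xh) (hxh : xh ∈ Icc ℓ u) :
      0 ≤ approxEstimator ℓ u F xh x - gradEstimator F xh x ∧
      approxEstimator ℓ u F xh x - gradEstimator F xh x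
        ≤ ∑ i, fderiv ℝ F xh (Pi.single i 1) * (u i - ℓ i) ∧
      ∑ i, fderiv ℝ F xh (Pi.single i 1) * (u i - ℓ i) ≤ M * ∑ i, (u i - ℓ i) := by
    refine ⟨sub_nonneg.2 (gradEstimator_le_approxEstimator hmonoOn hlu hx hxh (hdiff xh)),
      approxEstimator_sub_gradEstimator_le hmonoOn hlu hx hxh (hdiff xh), ?_⟩
    rw [Finset.mul_sum]
    gcongr with i
    · exact (sub_pos.2 (hlu i)).le
    · exact hM xh hxh i
  refine ⟨gap, fun x hx => ?_⟩
  change 0 ≤ sInf {v | ∃ xh ∈ Icc ℓ u, v = approxEstimator ℓ u F xh x} - F x ∧ _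
  set S := {v | ∃ xh ∈ Icc ℓ u, v = approxEstimator ℓ u F xh x}
  have hlower : ∀ v ∈ S, F x ≤ v := by
    rintro v ⟨xh, hxh, rfl⟩
    exact (le_gradEstimator hsub hconc hmonoOn hx hxh (hdiff xh)).trans
      (gradEstimator_le_approxEstimator hmonoOn hlu hx hxh (hdiff xh))
  have hself : approxEstimator ℓ u F x x ∈ S := ⟨x, hx, rfl⟩
  refine ⟨sub_nonneg.2 (le_csInf ⟨_, hself⟩ hlower), ?_⟩
  calc sInf S - F x ≤ approxEstimator ℓ u F x x - gradEstimator F x x := by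
        rw [gradEstimator_self]; gcongr; exact csInf_le ⟨F x, hlower⟩ hself
    _ ≤ M * ∑ i, (u i - ℓ i) := (gap x hx x hx).2.1.trans (gap x hx x hx).2.2

/-- the gap of the approximate overestimator shrinks with the rectangle.
For a non-decreasing, differentiable, DR-submodular `F` on the compact rectangle
`X = Icc ℓ u` (with `ℓ i < u i`) whose partial derivatives on `X` are bounded above by `M`:
for all `x, x̂ ∈ X`,
`0 ≤ F̆(x; x̂) − F̃(x; x̂) ≤ ∑ i (∂F/∂x_i)(x̂)·(u_i − ℓ_i) ≤ M·∑ i (u_i − ℓ_i)`,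
and consequently `0 ≤ inf_{x̂ ∈ X} F̆(x; x̂) − F x ≤ M·‖u − ℓ‖₁` for all `x ∈ X`.
(`xh` plays the role of `x̂`.) -/
theorem stmt_15 {n : ℕ} (hn : 1 ≤ n) (ℓ u : Fin n → ℝ) (hlu : ∀ i, ℓ i < u i)
    (F : (Fin n → ℝ) → ℝ) (hdiff : Differentiable ℝ F)
    (hsub : ∀ x ∈ Set.Icc ℓ u, ∀ y ∈ Set.Icc ℓ u, F (x ⊔ y) + F (x ⊓ y) ≤ F x + F y)
    (hconc : ∀ (i : Fin n), ∀ x ∈ Set.Icc ℓ u,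
      ConcaveOn ℝ {t : ℝ | x + Pi.single i t ∈ Set.Icc ℓ u}
        (fun t : ℝ => F (x + Pi.single i t)))
    (hmono : ∀ x ∈ Set.Icc ℓ u, ∀ y ∈ Set.Icc ℓ u, x ≤ y → F x ≤ F y)
    (M : ℝ) (hM : ∀ xh ∈ Set.Icc ℓ u, ∀ i : Fin n, fderiv ℝ F xh (Pi.single i 1) ≤ M) :
    (∀ x ∈ Set.Icc ℓ u, ∀ xh ∈ Set.Icc ℓ u,
      0 ≤ (F xh + ∑ i : Fin n,
              fderiv ℝ F xh (Pi.single i 1) * ((u i - xh i) / (u i - ℓ i)) * (x i - ℓ i))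
          - (F xh + ∑ i : Fin n, fderiv ℝ F xh (Pi.single i 1) * max (x i - xh i) 0)
      ∧ (F xh + ∑ i : Fin n,
              fderiv ℝ F xh (Pi.single i 1) * ((u i - xh i) / (u i - ℓ i)) * (x i - ℓ i))
          - (F xh + ∑ i : Fin n, fderiv ℝ F xh (Pi.single i 1) * max (x i - xh i) 0)
        ≤ ∑ i : Fin n, fderiv ℝ F xh (Pi.single i 1) * (u i - ℓ i)
      ∧ ∑ i : Fin n, fderiv ℝ F xh (Pi.single i 1) * (u i - ℓ i)
        ≤ M * ∑ i : Fin n, (u i - ℓ i))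
    ∧ (∀ x ∈ Set.Icc ℓ u,
      0 ≤ sInf {v : ℝ | ∃ xh ∈ Set.Icc ℓ u,
            v = F xh + ∑ i : Fin n,
              fderiv ℝ F xh (Pi.single i 1) * ((u i - xh i) / (u i - ℓ i)) * (x i - ℓ i)}
          - F x
      ∧ sInf {v : ℝ | ∃ xh ∈ Set.Icc ℓ u,
            v = F xh + ∑ i : Fin n,
              fderiv ℝ F xh (Pi.single i 1) * ((u i - xh i) / (u i - ℓ i)) * (x i - ℓ i)}
          - F x
        ≤ M * ∑ i : Fin n, (u i - ℓ i)) :=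
  stmt_15_general ℓ u hlu F hdiff hsub hconc hmono M hM
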